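/- arXiv:1206.5046 — 2 statements merged into one kernel-verified Lean document; each statement's English description precedes it below -/
import Mathlib

section
/- For generalized Laguerre polynomials with parameter α > -1 and integers m ≥ 1, n ≥ 1 with m ≠ n, the integral a_{m,n}^{(α)}(x) := ∫₀ˣ L_m^{(α)}(y) L_n^{(α)}(y) e^{-y} y^α dy equals (e^{-x} x^{α+1} / (m-n)) · (L_n^{(α)}(x) L_{m-1}^{(α+1)}(x) − L_m^{(α)}(x) L_{n-1}^{(α+1)}(x)). -/
open MeasureTheory intervalIntegral

noncomputable def laguerre (α : ℝ) (n : ℕ) (x : ℝ) : ℝ :=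
  ∑ k ∈ Finset.range (n + 1),
    (-1 : ℝ) ^ k * Real.Gamma (α + n + 1) /
      (Real.Gamma (α + k + 1) * (Nat.factorial (n - k)) * (Nat.factorial k)) * x ^ k

/-!
Write `w_β(y) = e^{-y} y^β`. Comparing coefficients (the second identity is Pascal's rule) gives
`(L_{k+1}^{(α)})' = -L_k^{(α+1)}` and `(α+1-y) L_k^{(α+1)} + y (L_k^{(α+1)})' = (k+1) L_{k+1}^{(α)}`,
i.e. `(w_{α+1} L_k^{(α+1)})' = (k+1) w_α L_{k+1}^{(α)}`. By the product rule,
`w_{α+1} (L_n^{(α)} L_{m-1}^{(α+1)} - L_m^{(α)} L_{n-1}^{(α+1)})` then has derivative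
`(m-n) w_α L_m^{(α)} L_n^{(α)}`, the terms `w_{α+1} L_{m-1}^{(α+1)} L_{n-1}^{(α+1)}` cancelling,
and it vanishes at `0` since `α + 1 > 0`.
-/

open Polynomial

/-- Written with `n.choose k` so that it vanishes for `k > n`. -/
noncomputable def laguerreCoeff (α : ℝ) (n k : ℕ) : ℝ :=
  (-1) ^ k * (n.choose k / n.factorial) * (Real.Gamma (α + n + 1) / Real.Gamma (α + k + 1))

noncomputable def laguerrePoly (α : ℝ) (n : ℕ) : ℝ[X] :=
  ∑ k ∈ Finset.range (n + 1), C (laguerreCoeff α n k) * X ^ k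

lemma coeff_laguerrePoly (α : ℝ) (n k : ℕ) :
    (laguerrePoly α n).coeff k = laguerreCoeff α n k := by
  simp only [laguerrePoly, finsetSum_coeff, coeff_C_mul_X_pow, Finset.sum_ite_eq,
    Finset.mem_range]
  split_ifs with hk
  · rfl
  · simp [laguerreCoeff, Nat.choose_eq_zero_of_lt (not_lt.mp hk)]

lemma laguerre_eq_eval (α : ℝ) (n : ℕ) : laguerre α n = fun x ↦ (laguerrePoly α n).eval x := by
  ext x
  simp only [laguerre, laguerrePoly, eval_finsetSum, eval_mul, eval_C, eval_pow, eval_X]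
  refine Finset.sum_congr rfl fun k hk ↦ ?_
  have hkn : k ≤ n := Nat.lt_succ_iff.mp (Finset.mem_range.mp hk)
  have hchoose : (n.choose k : ℝ) ≠ 0 := by exact_mod_cast (Nat.choose_pos hkn).ne'
  rw [laguerreCoeff, ← Nat.choose_mul_factorial_mul_factorial hkn]
  push_cast
  field_simp

lemma laguerreCoeff_succ_succ_mul (α : ℝ) (n k : ℕ) :
    laguerreCoeff α (n + 1) (k + 1) * (k + 1) = -laguerreCoeff (α + 1) n k := by
  simp only [laguerreCoeff, Nat.factorial_succ, pow_succ]
  push_cast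
  rw [show α + (n + 1) + 1 = α + 1 + n + 1 by ring, show α + (k + 1) + 1 = α + 1 + k + 1 by ring]
  generalize Real.Gamma (α + 1 + n + 1) / Real.Gamma (α + 1 + k + 1) = r
  have hchoose : ((n + 1).choose (k + 1) : ℝ) * (k + 1) / ((n + 1) * n.factorial) =
      n.choose k / n.factorial := by
    rw [← Nat.cast_add_one, ← Nat.cast_add_one, ← Nat.cast_mul, ← Nat.add_one_mul_choose_eq]
    push_cast
    field_simp
  linear_combination (-(-1) ^ k * r) * hchoose

lemma derivative_laguerrePoly_succ (α : ℝ) (n : ℕ) :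
    derivative (laguerrePoly α (n + 1)) = -laguerrePoly (α + 1) n := by
  ext k
  rw [coeff_derivative, coeff_neg, coeff_laguerrePoly, coeff_laguerrePoly]
  exact_mod_cast laguerreCoeff_succ_succ_mul α n k

lemma add_one_mul_laguerreCoeff_zero {α : ℝ} (hα : -1 < α) (n : ℕ) :
    (α + 1) * laguerreCoeff (α + 1) n 0 = (n + 1) * laguerreCoeff α (n + 1) 0 := by
  have hΓ : Real.Gamma (α + 1 + 1) = (α + 1) * Real.Gamma (α + 1) :=
    Real.Gamma_add_one (by linarith)
  have hΓpos : 0 < Real.Gamma (α + 1) := Real.Gamma_pos_of_pos (by linarith)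
  have hα1 : α + 1 ≠ 0 := by linarith
  simp only [laguerreCoeff, Nat.choose_zero_right, Nat.factorial_succ, pow_zero, CharP.cast_eq_zero,
    add_zero]
  push_cast
  rw [show α + (n + 1) + 1 = α + 1 + n + 1 by ring, hΓ]
  field_simp

lemma laguerreCoeff_succ_rec {α : ℝ} (hα : -1 < α) (n k : ℕ) :
    (α + k + 2) * laguerreCoeff (α + 1) n (k + 1) - laguerreCoeff (α + 1) n k =
      (n + 1) * laguerreCoeff α (n + 1) (k + 1) := by
  have hpos : 0 < α + k + 2 := by linarith [(Nat.cast_nonneg k : (0 : ℝ) ≤ k)]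
  have hΓ : Real.Gamma (α + k + 2 + 1) = (α + k + 2) * Real.Gamma (α + k + 2) :=
    Real.Gamma_add_one hpos.ne'
  have hΓpos : 0 < Real.Gamma (α + k + 2) := Real.Gamma_pos_of_pos hpos
  simp only [laguerreCoeff, Nat.choose_succ_succ', Nat.factorial_succ, pow_succ]
  push_cast
  rw [show α + 1 + (k + 1) + 1 = α + k + 2 + 1 by ring, show α + 1 + k + 1 = α + k + 2 by ring,
    show α + (k + 1) + 1 = α + k + 2 by ring, show α + (n + 1) + 1 = α + 1 + n + 1 by ring, hΓ]
  field_simp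
  ring

lemma C_mul_laguerrePoly_succ {α : ℝ} (hα : -1 < α) (n : ℕ) :
    C ((n : ℝ) + 1) * laguerrePoly α (n + 1) =
      (C (α + 1) - X) * laguerrePoly (α + 1) n + X * derivative (laguerrePoly (α + 1) n) := by
  ext (_ | k)
  · simp only [coeff_C_mul, sub_mul, coeff_sub, coeff_X_mul_zero, add_zero, sub_zero,
      coeff_add, coeff_laguerrePoly]
    exact (add_one_mul_laguerreCoeff_zero hα n).symm
  · simp only [coeff_C_mul, sub_mul, coeff_sub, coeff_X_mul, coeff_add, coeff_derivative,
      coeff_laguerrePoly]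
    linear_combination -(laguerreCoeff_succ_rec hα n k)

lemma hasDerivAt_laguerre_succ (α : ℝ) (n : ℕ) (x : ℝ) :
    HasDerivAt (laguerre α (n + 1)) (-laguerre (α + 1) n x) x := by
  simpa only [laguerre_eq_eval, derivative_laguerrePoly_succ, eval_neg] using
    (laguerrePoly α (n + 1)).hasDerivAt x

lemma hasDerivAt_exp_neg_mul_rpow_mul_laguerre {α : ℝ} (hα : -1 < α) (n : ℕ) {y : ℝ}
    (hy : y ≠ 0) :
    HasDerivAt (fun t ↦ Real.exp (-t) * t ^ (α + 1) * laguerre (α + 1) n t)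
      ((n + 1) * (Real.exp (-y) * y ^ α * laguerre α (n + 1) y)) y := by
  have hexp : HasDerivAt (fun t ↦ Real.exp (-t)) (-Real.exp (-y)) y := by
    simpa using (hasDerivAt_neg y).exp
  have hpow : HasDerivAt (fun t ↦ t ^ (α + 1)) ((α + 1) * y ^ α) y := by
    simpa using Real.hasDerivAt_rpow_const (p := α + 1) (Or.inl hy)
  have hP := (laguerrePoly (α + 1) n).hasDerivAt y
  have hrec := congrArg (eval y) (C_mul_laguerrePoly_succ hα n)
  simp only [eval_mul, eval_C, eval_sub, eval_add, eval_X] at hrec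
  simp only [laguerre_eq_eval]
  refine ((hexp.mul hpow).mul hP).congr_deriv ?_
  rw [Pi.mul_apply, Real.rpow_add_one hy]
  linear_combination -(Real.exp (-y) * y ^ α) * hrec

lemma hasDerivAt_laguerre_wronskian {α : ℝ} (hα : -1 < α) (m n : ℕ) {y : ℝ} (hy : y ≠ 0) :
    HasDerivAt
      (fun t ↦ laguerre α (n + 1) t * (Real.exp (-t) * t ^ (α + 1) * laguerre (α + 1) m t) -
        laguerre α (m + 1) t * (Real.exp (-t) * t ^ (α + 1) * laguerre (α + 1) n t))
      (((m : ℝ) - n) * (laguerre α (m + 1) y * laguerre α (n + 1) y * Real.exp (-y) * y ^ α)) y :=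
  (((hasDerivAt_laguerre_succ α n y).mul (hasDerivAt_exp_neg_mul_rpow_mul_laguerre hα m hy)).sub
    ((hasDerivAt_laguerre_succ α m y).mul
      (hasDerivAt_exp_neg_mul_rpow_mul_laguerre hα n hy))).congr_deriv (by ring)

@[fun_prop]
lemma continuous_laguerre (α : ℝ) (n : ℕ) : Continuous (laguerre α n) := by
  simpa only [laguerre_eq_eval] using (laguerrePoly α n).continuous

theorem laguerre_offdiag_integral_general
    (α : ℝ) (hα : -1 < α) (m n : ℕ) (hm : 1 ≤ m) (hn : 1 ≤ n) (hmn : m ≠ n)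
    (x : ℝ) :
    (∫ y in (0 : ℝ)..x,
        laguerre α m y * laguerre α n y * Real.exp (-y) * y ^ α) =
      Real.exp (-x) * x ^ (α + 1) / ((m : ℝ) - n) *
        (laguerre α n x * laguerre (α + 1) (m - 1) x -
          laguerre α m x * laguerre (α + 1) (n - 1) x) := by
  obtain ⟨m, rfl⟩ : ∃ k, m = k + 1 := ⟨m - 1, by omega⟩
  obtain ⟨n, rfl⟩ : ∃ k, n = k + 1 := ⟨n - 1, by omega⟩
  have hmn' : (m : ℝ) - n ≠ 0 := sub_ne_zero.mpr (by exact_mod_cast (by omega : m ≠ n))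
  have hint : IntervalIntegrable
      (fun y ↦ laguerre α (m + 1) y * laguerre α (n + 1) y * Real.exp (-y) * y ^ α) volume 0 x :=
    (intervalIntegrable_rpow' hα).continuousOn_mul (by fun_prop)
  have hftc := integral_eq_sub_of_hasDeriv_right (a := 0) (b := x)
    (f := fun t ↦ laguerre α (n + 1) t * (Real.exp (-t) * t ^ (α + 1) * laguerre (α + 1) m t) -
      laguerre α (m + 1) t * (Real.exp (-t) * t ^ (α + 1) * laguerre (α + 1) n t))
    (by fun_prop (disch := linarith))
    (fun y hy ↦ (hasDerivAt_laguerre_wronskian hα m n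
      (ne_of_mem_of_not_mem (show y ∈ Set.uIoo 0 x from hy) Set.left_notMem_uIoo)).hasDerivWithinAt)
    (hint.const_mul _)
  rw [intervalIntegral.integral_const_mul, Real.zero_rpow (by linarith)] at hftc
  push_cast
  simp only [add_sub_add_right_eq_sub]
  field_simp
  linear_combination hftc

theorem laguerre_offdiag_integral
    (α : ℝ) (hα : -1 < α) (m n : ℕ) (hm : 1 ≤ m) (hn : 1 ≤ n) (hmn : m ≠ n)
    (x : ℝ) (hx : 0 < x) :
    (∫ y in (0 : ℝ)..x,
        laguerre α m y * laguerre α n y * Real.exp (-y) * y ^ α) =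
      Real.exp (-x) * x ^ (α + 1) / ((m : ℝ) - n) *
        (laguerre α n x * laguerre (α + 1) (m - 1) x -
          laguerre α m x * laguerre (α + 1) (n - 1) x) :=
  laguerre_offdiag_integral_general α hα m n hm hn hmn x
end

section
/- For Hermite polynomials H_m, H_n with m ≠ n, the integral a_{n,m}(x) := ∫_{-∞}^x e^{-y²} H_n(y) H_m(y) dy equals e^{-x²} (H_n(x) H_{m+1}(x) − H_m(x) H_{n+1}(x)) / (2(m−n)). -/
open MeasureTheory

/-- Physicists' Hermite polynomials: `H_0 = 1`, `H_1(x) = 2x`,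
`H_{n+2}(x) = 2x H_{n+1}(x) - 2(n+1) H_n(x)`. -/
noncomputable def hermite : ℕ → ℝ → ℝ
  | 0, _ => 1
  | 1, x => 2 * x
  | n + 2, x => 2 * x * hermite (n + 1) x - 2 * ((n : ℝ) + 1) * hermite n x

/-!
With `W = H_n H_{m+1} - H_m H_{n+1}`, the identities `(e^{-y²} H_k)' = -e^{-y²} H_{k+1}` and
`H_{k+1}' = 2(k+1) H_k` give `(e^{-y²} W)' = 2(m - n) e^{-y²} H_n H_m`. Both `e^{-y²} W` and
this derivative are Gaussians times polynomials, hence integrable, so `e^{-y²} W → 0` at `-∞`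
and the fundamental theorem of calculus on `(-∞, x]` gives the formula.
-/

open Real
open scoped Polynomial

lemma hermite_zero : hermite 0 = fun _ => 1 := rfl

lemma hermite_one : hermite 1 = fun x => 2 * x := rfl

lemma hermite_add_two (k : ℕ) :
    hermite (k + 2) = fun x => 2 * x * hermite (k + 1) x - 2 * ((k : ℝ) + 1) * hermite k x :=
  rfl

lemma hasDerivAt_hermite_succ (k : ℕ) (x : ℝ) :
    HasDerivAt (hermite (k + 1)) (2 * ((k : ℝ) + 1) * hermite k x) x := by
  induction k using Nat.twoStepInduction with
  | zero =>
    rw [hermite_one]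
    simpa [hermite_zero] using (hasDerivAt_id x).const_mul (2 : ℝ)
  | one =>
    rw [hermite_add_two, hermite_one, hermite_zero]
    refine (((hasDerivAt_id x).const_mul (2 : ℝ)).mul ((hasDerivAt_id x).const_mul (2 : ℝ))
      |>.sub_const _).congr_deriv ?_
    simp only [id]
    push_cast
    ring
  | more k ih ih1 =>
    rw [hermite_add_two (k + 1)]
    refine (((hasDerivAt_id x).const_mul (2 : ℝ)).mul ih1 |>.sub (ih.const_mul _)).congr_deriv ?_
    rw [hermite_add_two k]
    simp only [id]
    push_cast
    ring

lemma hasDerivAt_hermite (k : ℕ) (x : ℝ) :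
    HasDerivAt (hermite k) (2 * x * hermite k x - hermite (k + 1) x) x := by
  cases k with
  | zero =>
    rw [hermite_zero]
    exact (hasDerivAt_const x 1).congr_deriv (by simp [hermite_one])
  | succ k =>
    refine (hasDerivAt_hermite_succ k x).congr_deriv ?_
    rw [hermite_add_two]
    ring

lemma hasDerivAt_exp_neg_sq_mul_hermite (k : ℕ) (x : ℝ) :
    HasDerivAt (fun y => exp (-y ^ 2) * hermite k y)
      (-(exp (-x ^ 2) * hermite (k + 1) x)) x := by
  have hexp : HasDerivAt (fun y => exp (-y ^ 2)) (exp (-x ^ 2) * -(2 * x)) x := by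
    simpa using ((hasDerivAt_pow 2 x).neg).exp
  exact (hexp.mul (hasDerivAt_hermite k x)).congr_deriv (by ring)

/-- Differentiating `(e^{-y²} H_n) H_{m+1}` and `(e^{-y²} H_m) H_{n+1}` produces the same term
`-e^{-y²} H_{n+1} H_{m+1}`, which cancels in the difference. -/
lemma hasDerivAt_exp_neg_sq_mul_hermite_cross (n m : ℕ) (x : ℝ) :
    HasDerivAt
      (fun y => exp (-y ^ 2) * (hermite n y * hermite (m + 1) y - hermite m y * hermite (n + 1) y))
      (exp (-x ^ 2) * hermite n x * hermite m x * (2 * ((m : ℝ) - n))) x := by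
  have h := ((hasDerivAt_exp_neg_sq_mul_hermite n x).mul (hasDerivAt_hermite_succ m x)).sub
    ((hasDerivAt_exp_neg_sq_mul_hermite m x).mul (hasDerivAt_hermite_succ n x))
  refine (h.congr_deriv (by ring)).congr_of_eventuallyEq (.of_forall fun y => ?_)
  simp only [Pi.sub_apply, Pi.mul_apply]
  ring

lemma integrable_exp_neg_mul_sq_mul_eval {b : ℝ} (hb : 0 < b) (p : ℝ[X]) :
    Integrable fun y => exp (-b * y ^ 2) * p.eval y := by
  induction p using Polynomial.induction_on' with
  | add p q hp hq => simpa only [Polynomial.eval_add, mul_add, Pi.add_def] using hp.add hq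
  | monomial k c =>
    have hk : (-1 : ℝ) < k := by linarith [k.cast_nonneg (α := ℝ)]
    have h := (integrable_rpow_mul_exp_neg_mul_sq hb hk).const_mul c
    simpa [Real.rpow_natCast, mul_assoc, mul_comm, mul_left_comm] using h

/-- Mathlib's `Polynomial.hermite` is the probabilists' normalization, hence this definition. -/
noncomputable def hermitePolynomial : ℕ → ℝ[X]
  | 0 => 1
  | 1 => Polynomial.C 2 * Polynomial.X
  | k + 2 => Polynomial.C 2 * Polynomial.X * hermitePolynomial (k + 1)
      - Polynomial.C (2 * ((k : ℝ) + 1)) * hermitePolynomial k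

lemma eval_hermitePolynomial (k : ℕ) (x : ℝ) : (hermitePolynomial k).eval x = hermite k x := by
  induction k using Nat.twoStepInduction with
  | zero => simp [hermitePolynomial, hermite_zero]
  | one => simp [hermitePolynomial, hermite_one]
  | more k ih ih1 => simp [hermitePolynomial, hermite_add_two, ih, ih1]

lemma integrable_exp_neg_sq_mul_hermite_mul_hermite (n m : ℕ) :
    Integrable fun y => exp (-y ^ 2) * (hermite n y * hermite m y) := by
  simpa [eval_hermitePolynomial] using
    integrable_exp_neg_mul_sq_mul_eval one_pos (hermitePolynomial n * hermitePolynomial m)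

theorem hermite_offdiag_integral (n m : ℕ) (hmn : m ≠ n) (x : ℝ) :
    (∫ y in Set.Iic x, Real.exp (-y ^ 2) * hermite n y * hermite m y) =
      Real.exp (-x ^ 2) *
        (hermite n x * hermite (m + 1) x - hermite m x * hermite (n + 1) x) /
        (2 * ((m : ℝ) - n)) := by
  have hm_sub_n : 2 * ((m : ℝ) - n) ≠ 0 :=
    mul_ne_zero two_ne_zero (sub_ne_zero.mpr (Nat.cast_injective.ne hmn))
  have hderiv : ∀ y ∈ Set.Iic x, HasDerivAt _ _ y := fun y _ =>
    hasDerivAt_exp_neg_sq_mul_hermite_cross n m y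
  have hderiv_int : Integrable fun y =>
      exp (-y ^ 2) * hermite n y * hermite m y * (2 * ((m : ℝ) - n)) := by
    simpa only [mul_assoc] using (integrable_exp_neg_sq_mul_hermite_mul_hermite n m).mul_const _
  have hint : Integrable fun y =>
      exp (-y ^ 2) * (hermite n y * hermite (m + 1) y - hermite m y * hermite (n + 1) y) := by
    simpa only [mul_sub, Pi.sub_def] using
      (integrable_exp_neg_sq_mul_hermite_mul_hermite n (m + 1)).sub
        (integrable_exp_neg_sq_mul_hermite_mul_hermite m (n + 1))
  have hlim := tendsto_zero_of_hasDerivAt_of_integrableOn_Iic hderiv hderiv_int.integrableOn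
    hint.integrableOn
  rw [eq_div_iff hm_sub_n, ← integral_mul_const,
    integral_Iic_of_hasDerivAt_of_tendsto' hderiv hderiv_int.integrableOn hlim, sub_zero]
end
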